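/- If u₁u₂ and u₂u₃ are Lyndon words (ALSWs) and u₂ is nonempty, then u₁u₂u₃ is a Lyndon word. -/

import Mathlib

/-!
A word is an ALSW iff it is nonempty and greater than each of its proper nonempty suffixes: the
comparison of `w = uv` with the rotation `vu` is decided within the first `|v|` letters, since
otherwise `w = vt` with `t ≻ u`, `|t| = |u|`, and the rotation `tv` would exceed `w`.
A proper suffix of `u₁u₂u₃` is either a suffix `s` of `u₂u₃`, and then `u₁u₂u₃ ≻ u₂u₃ ⪰ s`,
or it is `qu₂u₃` with `q` a proper suffix of `u₁`. In both cases the needed comparison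
(`u₁u₂ ≻ u₂`, resp. `u₁u₂ ≻ qu₂`) comes from `u₁u₂` being an ALSW and is decided at a letter,
so it survives appending `u₃`.
-/

/-- The lexicographic ordering on words with the convention that a proper prefix is
greater than the word extending it (`u ≻ uv` for `v ≠ 1`): `gtLex u v` means `u ≻ v`. -/
def gtLex {X : Type*} [LinearOrder X] : List X → List X → Prop
  | [], [] => False
  | [], _ :: _ => True
  | _ :: _, [] => False
  | a :: u, b :: v => b < a ∨ (a = b ∧ gtLex u v)

/-- `w` is an associative Lyndon–Shirshov word: `w` is nonempty and `w ≻ v ++ u` for every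
factorization `w = u ++ v` into nonempty words. -/
def IsALSW {X : Type*} [LinearOrder X] (w : List X) : Prop :=
  w ≠ [] ∧ ∀ u v : List X, u ≠ [] → v ≠ [] → w = u ++ v → gtLex w (v ++ u)

section Lex

variable {X : Type*} [LinearOrder X]

theorem gtLex_irrefl : ∀ u : List X, ¬ gtLex u u
  | [] => id
  | a :: u => fun h => h.elim (lt_irrefl a) fun h => gtLex_irrefl u h.2

theorem gtLex_trans : ∀ u v w : List X, gtLex u v → gtLex v w → gtLex u w
  | [], [], _ => fun h _ => h.elim
  | [], _ :: _, [] => fun _ h => h.elim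
  | [], _ :: _, _ :: _ => fun _ _ => trivial
  | _ :: _, [], _ => fun h _ => h.elim
  | _ :: _, _ :: _, [] => fun _ h => h.elim
  | a :: u, b :: v, c :: w => fun h₁ h₂ => by
      rcases h₁ with h₁ | ⟨rfl, h₁⟩ <;> rcases h₂ with h₂ | ⟨rfl, h₂⟩
      · exact Or.inl (h₂.trans h₁)
      · exact Or.inl h₁
      · exact Or.inl h₂
      · exact Or.inr ⟨rfl, gtLex_trans u v w h₁ h₂⟩

theorem gtLex.append_of_length_le :
    ∀ {u v : List X} (x y : List X), gtLex u v → v.length ≤ u.length → gtLex (u ++ x) (v ++ y)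
  | [], [], _, _ => fun h _ => h.elim
  | [], _ :: _, _, _ => fun _ h => absurd h (by simp)
  | _ :: _, [], _, _ => fun h _ => h.elim
  | _ :: _, _ :: _, x, y => fun h hl => by
      rcases h with h | ⟨rfl, h⟩
      · exact Or.inl h
      · exact Or.inr ⟨rfl, h.append_of_length_le x y (by simpa using hl)⟩

theorem gtLex_of_append_left : ∀ (c : List X) {u v : List X},
    gtLex (c ++ u) (c ++ v) → gtLex u v
  | [], _, _ => id
  | a :: c, _, _ => fun h => h.elim (fun h => absurd h (lt_irrefl a)) fun h => gtLex_of_append_left c h.2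

theorem gtLex_or_isPrefix_of_gtLex_append :
    ∀ {u : List X} (v x : List X), gtLex u (v ++ x) → gtLex u v ∨ v <+: u
  | _, [], _ => fun _ => Or.inr (List.nil_prefix)
  | [], _ :: _, _ => fun _ => Or.inl trivial
  | _ :: _, _ :: _, x => fun h => by
      rcases h with h | ⟨rfl, h⟩
      · exact Or.inl (Or.inl h)
      · rcases gtLex_or_isPrefix_of_gtLex_append _ x h with h | h
        · exact Or.inl (Or.inr ⟨rfl, h⟩)
        · exact Or.inr ((List.prefix_cons_inj _).2 h)

end Lex

section ALSW

variable {X : Type*} [LinearOrder X] {w p s : List X}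

theorem IsALSW.gtLex_of_eq_append (h : IsALSW w) (hp : p ≠ []) (hs : s ≠ [])
    (hw : w = p ++ s) : gtLex w s := by
  have rot := h.2 p s hp hs hw
  refine (gtLex_or_isPrefix_of_gtLex_append s p rot).resolve_right ?_
  rintro ⟨t, rfl⟩
  have hlen : t.length = p.length := by
    have := congrArg List.length hw
    simp only [List.length_append] at this
    omega
  have ht : t ≠ [] := by
    rw [← List.length_pos_iff, hlen, List.length_pos_iff]; exact hp
  -- `t ≻ p` with `|t| = |p|`, so the rotation `t ++ s` exceeds `p ++ s = w`
  have hrot : gtLex (t ++ s) (s ++ t) :=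
    hw ▸ (gtLex_of_append_left s rot).append_of_length_le s s hlen.ge
  exact gtLex_irrefl _ (gtLex_trans _ _ _ (h.2 s t hs ht rfl) hrot)

theorem isALSW_of_gtLex_suffix (hw : w ≠ [])
    (h : ∀ p s : List X, p ≠ [] → s ≠ [] → w = p ++ s → gtLex w s) : IsALSW w := by
  refine ⟨hw, fun p s hp hs hps => ?_⟩
  simpa using (h p s hp hs hps).append_of_length_le [] p (by simp [hps])

end ALSW

/-- If `u₁ ++ u₂` and `u₂ ++ u₃` are ALSWs and `u₂ ≠ []`, then `u₁ ++ u₂ ++ u₃` is an ALSW. -/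
theorem isALSW_glue {X : Type*} [LinearOrder X] (u₁ u₂ u₃ : List X)
    (h12 : IsALSW (u₁ ++ u₂)) (h23 : IsALSW (u₂ ++ u₃)) (h2 : u₂ ≠ []) :
    IsALSW (u₁ ++ u₂ ++ u₃) := by
  rcases eq_or_ne u₁ [] with rfl | h1
  · simpa using h23
  have key : gtLex (u₁ ++ u₂ ++ u₃) (u₂ ++ u₃) :=
    (h12.gtLex_of_eq_append h1 h2 rfl).append_of_length_le u₃ u₃ (by simp)
  refine isALSW_of_gtLex_suffix (by simp [h2]) fun p s hp hs hw => ?_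
  rw [List.append_assoc, List.append_eq_append_iff] at hw
  rcases hw with ⟨q, rfl, hq⟩ | ⟨q, rfl, rfl⟩
  · rcases eq_or_ne q [] with rfl | hq0
    · obtain rfl : s = u₂ ++ u₃ := by simpa using hq.symm
      simpa using key
    · exact gtLex_trans _ _ _ key (h23.gtLex_of_eq_append hq0 hs hq)
  · have h := h12.gtLex_of_eq_append hp (by simp [h2]) (List.append_assoc p q u₂)
    simpa using h.append_of_length_le u₃ u₃ (by simp)
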